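/- In a finite-horizon MDP, for all t and s, Var(G^PDIS(τ^{μ*_{t:T−1}}_{t:T−1}) | S_t = s) ≤ Var(G_t | S_t = s), where μ* is the optimal behavior policy defined by μ*_t(a|s) ∝ π_t(a|s)√(u_{π,t}(s,a)) and G_t is the on-policy Monte Carlo return under π. -/

import Mathlib

open Finset

def Traj (S A : Type) : ℕ → Type
  | 0 => PUnit
  | n+1 => A × S × Traj S A n

instance trajFintype (S A : Type) [Fintype S] [Fintype A] : (n : ℕ) → Fintype (Traj S A n)
  | 0 => inferInstanceAs (Fintype PUnit)
  | n+1 => letI := trajFintype S A n; inferInstanceAs (Fintype (A × S × Traj S A n))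

/-- Probability of a trajectory segment of `n` steps starting at time `t` in state `s`,
under behavior policy `b` and transition kernel `p`. -/
noncomputable def trajP {S A : Type} (b : ℕ → S → A → ℝ) (p : S → A → S → ℝ) :
    (n : ℕ) → ℕ → S → Traj S A n → ℝ
  | 0, _, _, _ => 1
  | n+1, t, s, (a, s', τ) => b t s a * p s a s' * trajP b p n (t+1) s' τ

/-- Per-decision importance sampling return of a trajectory segment, with target policy `π`,
behavior policy `b`, and (deterministic) reward function `r`. -/
noncomputable def pdis {S A : Type} (π b : ℕ → S → A → ℝ) (r : S → A → ℝ) :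
    (n : ℕ) → ℕ → S → Traj S A n → ℝ
  | 0, _, _, _ => 0
  | n+1, t, s, (a, s', τ) => (π t s a / b t s a) * (r s a + pdis π b r n (t+1) s' τ)

/-- On-policy (undiscounted) return of a trajectory segment. -/
noncomputable def retG {S A : Type} (r : S → A → ℝ) : (n : ℕ) → S → Traj S A n → ℝ
  | 0, _, _ => 0
  | n+1, s, (a, s', τ) => r s a + retG r n s' τ

/-- Expectation of a trajectory functional, conditioned on `S_t = s`. -/
noncomputable def Ex {S A : Type} [Fintype S] [Fintype A] (b : ℕ → S → A → ℝ)
    (p : S → A → S → ℝ) (n t : ℕ) (s : S) (f : Traj S A n → ℝ) : ℝ :=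
  ∑ τ : Traj S A n, trajP b p n t s τ * f τ

/-- Variance of a trajectory functional, conditioned on `S_t = s`. -/
noncomputable def VarTraj {S A : Type} [Fintype S] [Fintype A] (b : ℕ → S → A → ℝ)
    (p : S → A → S → ℝ) (n t : ℕ) (s : S) (f : Traj S A n → ℝ) : ℝ :=
  Ex b p n t s (fun τ => (f τ)^2) - (Ex b p n t s f)^2

/-- `ν_{π,t}(s,a)`: variance of the next-state value. -/
noncomputable def nuF {S A : Type} [Fintype S] (p : S → A → S → ℝ) (v : ℕ → S → ℝ)
    (t : ℕ) (s : S) (a : A) : ℝ :=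
  (∑ s', p s a s' * (v (t+1) s')^2) - (∑ s', p s a s' * v (t+1) s')^2

lemma traj_sum {S A : Type} [Fintype S] [Fintype A] (n : ℕ) (F : Traj S A (n+1) → ℝ) :
    ∑ τ : Traj S A (n+1), F τ = ∑ a : A, ∑ s' : S, ∑ τ : Traj S A n, F (a, s', τ) := by
  show ∑ x : A × S × Traj S A n, F x = _
  refine (Fintype.sum_prod_type (fun x : A × S × Traj S A n => F x)).trans ?_
  exact Finset.sum_congr rfl fun a _ => Fintype.sum_prod_type _

lemma trajP_succ {S A : Type} (b : ℕ → S → A → ℝ) (p : S → A → S → ℝ) (n t : ℕ) (s : S)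
    (a : A) (s' : S) (τ : Traj S A n) :
    trajP b p (n+1) t s (a, s', τ) = b t s a * p s a s' * trajP b p n (t+1) s' τ := rfl

lemma sq_sum_le_aux {ι : Type*} [Fintype ι] (w x : ι → ℝ) (h0 : ∀ i, 0 ≤ w i)
    (h1 : ∑ i, w i = 1) : (∑ i, w i * x i)^2 ≤ ∑ i, w i * (x i)^2 := by
  have key := Finset.sum_mul_sq_le_sq_mul_sq Finset.univ
    (fun i => Real.sqrt (w i)) (fun i => Real.sqrt (w i) * x i)
  have e1 : ∀ i : ι, Real.sqrt (w i) * (Real.sqrt (w i) * x i) = w i * x i := fun i => by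
    rw [← mul_assoc, Real.mul_self_sqrt (h0 i)]
  have e2 : ∀ i : ι, Real.sqrt (w i) ^ 2 = w i := fun i => Real.sq_sqrt (h0 i)
  have e3 : ∀ i : ι, (Real.sqrt (w i) * x i)^2 = w i * (x i)^2 := fun i => by
    rw [mul_pow, e2]
  simp only [e1, e2, e3, h1, one_mul] at key
  exact key

lemma sum_trajP {S A : Type} [Fintype S] [Fintype A] (b : ℕ → S → A → ℝ)
    (p : S → A → S → ℝ) (hb1 : ∀ t s, ∑ a, b t s a = 1)
    (hp1 : ∀ s a, ∑ s', p s a s' = 1) :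
    ∀ (n t : ℕ) (s : S), ∑ τ : Traj S A n, trajP b p n t s τ = 1 := by
  intro n
  induction n with
  | zero => intro t s; show ∑ _τ : PUnit, (1:ℝ) = 1; simp
  | succ n IH =>
    intro t s
    rw [traj_sum]
    have : ∀ a : A, ∑ s' : S, ∑ τ : Traj S A n, trajP b p (n+1) t s (a, s', τ)
        = b t s a := by
      intro a
      have : ∀ s' : S, ∑ τ : Traj S A n, trajP b p (n+1) t s (a, s', τ)
          = b t s a * p s a s' := by
        intro s'
        simp only [trajP_succ, mul_assoc, ← Finset.mul_sum, IH (t+1) s', mul_one]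
      simp only [this, ← Finset.mul_sum, hp1, mul_one]
    simp only [this, hb1]

lemma trajP_nonneg {S A : Type} [Fintype S] [Fintype A] (b : ℕ → S → A → ℝ)
    (p : S → A → S → ℝ) (hb0 : ∀ t s a, 0 ≤ b t s a)
    (hp0 : ∀ s a s', 0 ≤ p s a s') :
    ∀ (n t : ℕ) (s : S) (τ : Traj S A n), 0 ≤ trajP b p n t s τ := by
  intro n
  induction n with
  | zero => intro t s τ; exact zero_le_one
  | succ n IH =>
    intro t s τ
    obtain ⟨a, s', τ'⟩ := (τ : A × S × Traj S A n)
    exact mul_nonneg (mul_nonneg (hb0 t s a) (hp0 s a s')) (IH (t+1) s' τ')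

lemma Ex_affine {S A : Type} [Fintype S] [Fintype A] (b : ℕ → S → A → ℝ)
    (p : S → A → S → ℝ) (hb1 : ∀ t s, ∑ a, b t s a = 1)
    (hp1 : ∀ s a, ∑ s', p s a s' = 1) (n t : ℕ) (s : S) (c d : ℝ)
    (f : Traj S A n → ℝ) :
    Ex b p n t s (fun τ => c * (d + f τ)) = c * (d + Ex b p n t s f) := by
  have expand : ∀ τ : Traj S A n, trajP b p n t s τ * (c * (d + f τ))
      = c * d * trajP b p n t s τ + c * (trajP b p n t s τ * f τ) := fun τ => by ring
  simp only [Ex, expand, Finset.sum_add_distrib, ← Finset.mul_sum,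
    sum_trajP b p hb1 hp1]
  ring

lemma Ex_sq_shift {S A : Type} [Fintype S] [Fintype A] (b : ℕ → S → A → ℝ)
    (p : S → A → S → ℝ) (hb1 : ∀ t s, ∑ a, b t s a = 1)
    (hp1 : ∀ s a, ∑ s', p s a s' = 1) (n t : ℕ) (s : S) (c : ℝ)
    (f : Traj S A n → ℝ) :
    Ex b p n t s (fun τ => (c + f τ)^2)
      = VarTraj b p n t s f + (c + Ex b p n t s f)^2 := by
  have expand : ∀ τ : Traj S A n, trajP b p n t s τ * (c + f τ)^2
      = c^2 * trajP b p n t s τ + 2*c*(trajP b p n t s τ * f τ)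
        + trajP b p n t s τ * (f τ)^2 := fun τ => by ring
  simp only [Ex, VarTraj, expand, Finset.sum_add_distrib, ← Finset.mul_sum,
    sum_trajP b p hb1 hp1]
  ring

lemma VarTraj_nonneg {S A : Type} [Fintype S] [Fintype A] (b : ℕ → S → A → ℝ)
    (p : S → A → S → ℝ) (hb0 : ∀ t s a, 0 ≤ b t s a)
    (hb1 : ∀ t s, ∑ a, b t s a = 1) (hp0 : ∀ s a s', 0 ≤ p s a s')
    (hp1 : ∀ s a, ∑ s', p s a s' = 1) (n t : ℕ) (s : S) (f : Traj S A n → ℝ) :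
    0 ≤ VarTraj b p n t s f := by
  have := sq_sum_le_aux (fun τ : Traj S A n => trajP b p n t s τ) (fun τ => f τ)
    (fun τ => trajP_nonneg b p hb0 hp0 n t s τ) (sum_trajP b p hb1 hp1 n t s)
  simpa [VarTraj, Ex, sub_nonneg] using this

lemma Ex_succ {S A : Type} [Fintype S] [Fintype A] (b : ℕ → S → A → ℝ)
    (p : S → A → S → ℝ) (n t : ℕ) (s : S) (f : Traj S A (n+1) → ℝ) :
    Ex b p (n+1) t s f
      = ∑ a, ∑ s', b t s a * p s a s' * Ex b p n (t+1) s' (fun τ => f (a, s', τ)) := by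
  simp only [Ex]
  rw [traj_sum]
  refine Finset.sum_congr rfl fun a _ => Finset.sum_congr rfl fun s' _ => ?_
  simp only [trajP_succ, Finset.mul_sum, mul_assoc]

open scoped Classical in
/-- The PDIS estimator under the optimal behavior policy `μ*` has variance no
larger than the on-policy Monte Carlo estimator. -/
theorem mu_star_better_than_onpolicy {S A : Type} [Fintype S] [Fintype A]
    (T : ℕ) (hT : 1 ≤ T) (p : S → A → S → ℝ) (r : S → A → ℝ)
    (π μstar : ℕ → S → A → ℝ)
    (v : ℕ → S → ℝ) (q u : ℕ → S → A → ℝ)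
    (hp0 : ∀ s a s', 0 ≤ p s a s') (hp1 : ∀ s a, ∑ s', p s a s' = 1)
    (hπ0 : ∀ t s a, 0 ≤ π t s a) (hπ1 : ∀ t s, ∑ a, π t s a = 1)
    (hμstar0 : ∀ t s a, 0 ≤ μstar t s a) (hμstar1 : ∀ t s, ∑ a, μstar t s a = 1)
    (hvT : ∀ s, v T s = 0)
    (hq : ∀ t, t < T → ∀ s a, q t s a = r s a + ∑ s', p s a s' * v (t+1) s')
    (hv : ∀ t, t < T → ∀ s, v t s = ∑ a, π t s a * q t s a)
    (huT : ∀ s a, u (T - 1) s a = (q (T - 1) s a) ^ 2)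
    (hu : ∀ t, t + 1 < T → ∀ s a, u t s a
      = (∑ s', p s a s' *
          VarTraj μstar p (T - (t+1)) (t+1) s' (pdis π μstar r (T - (t+1)) (t+1) s'))
        + nuF p v t s a + (q t s a) ^ 2)
    (hμstar : ∀ t s a, μstar t s a =
      if ∃ a₀, π t s a₀ * Real.sqrt (u t s a₀) ≠ 0
      then π t s a * Real.sqrt (u t s a) / ∑ b, π t s b * Real.sqrt (u t s b)
      else 1 / (Fintype.card A : ℝ)) :
    ∀ t, t < T → ∀ s,
      VarTraj μstar p (T - t) t s (pdis π μstar r (T - t) t s)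
        ≤ VarTraj π p (T - t) t s (retG r (T - t) s) := by
  -- nonnegativity facts
  have hVarμ : ∀ (n t : ℕ) (s : S) (f : Traj S A n → ℝ), 0 ≤ VarTraj μstar p n t s f :=
    fun n t s f => VarTraj_nonneg μstar p hμstar0 hμstar1 hp0 hp1 n t s f
  have hVarπ : ∀ (n t : ℕ) (s : S) (f : Traj S A n → ℝ), 0 ≤ VarTraj π p n t s f :=
    fun n t s f => VarTraj_nonneg π p hπ0 hπ1 hp0 hp1 n t s f
  have hnu : ∀ t s a, 0 ≤ nuF p v t s a := by
    intro t s a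
    have := sq_sum_le_aux (fun s' => p s a s') (fun s' => v (t+1) s') (hp0 s a) (hp1 s a)
    simpa [nuF, sub_nonneg] using this
  -- unified formula for u, valid for all t < T
  have hUnified : ∀ t, t < T → ∀ s a, u t s a
      = (∑ s', p s a s' * VarTraj μstar p (T - (t+1)) (t+1) s'
            (pdis π μstar r (T - (t+1)) (t+1) s'))
        + nuF p v t s a + (q t s a)^2 := by
    intro t ht s a
    rcases lt_or_ge (t+1) T with h | h
    · exact hu t h s a
    · have hTt : T - (t+1) = 0 := by omega
      have hvar0 : ∀ s' : S, VarTraj μstar p (T-(t+1)) (t+1) s'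
          (pdis π μstar r (T-(t+1)) (t+1) s') = 0 := by
        intro s'; rw [hTt]; simp [VarTraj, Ex, pdis]
      have hnu0 : nuF p v t s a = 0 := by
        simp only [nuF]
        rw [show t+1 = T from by omega]
        simp [hvT]
      simp only [hvar0, mul_zero, Finset.sum_const_zero, hnu0, add_zero, zero_add]
      rw [show t = T - 1 from by omega, huT]
  have hU : ∀ t, t < T → ∀ s a, (q t s a)^2 ≤ u t s a := by
    intro t ht s a
    rw [hUnified t ht s a]
    have h1 : (0:ℝ) ≤ ∑ s', p s a s' * VarTraj μstar p (T-(t+1)) (t+1) s'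
        (pdis π μstar r (T-(t+1)) (t+1) s') :=
      Finset.sum_nonneg fun s' _ => mul_nonneg (hp0 s a s') (hVarμ _ _ _ _)
    nlinarith [hnu t s a]
  have hu0 : ∀ t, t < T → ∀ s a, (0:ℝ) ≤ u t s a :=
    fun t ht s a => (sq_nonneg _).trans (hU t ht s a)
  -- support condition
  have hZ : ∀ t, t < T → ∀ s a, μstar t s a = 0 → π t s a * Real.sqrt (u t s a) = 0 := by
    intro t ht s a hm
    rw [hμstar t s a] at hm
    split_ifs at hm with hcase
    · obtain ⟨a₀, ha₀⟩ := hcase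
      have hD : 0 < ∑ b', π t s b' * Real.sqrt (u t s b') :=
        Finset.sum_pos' (fun b' _ => mul_nonneg (hπ0 t s b') (Real.sqrt_nonneg _))
          ⟨a₀, Finset.mem_univ a₀,
            lt_of_le_of_ne (mul_nonneg (hπ0 t s a₀) (Real.sqrt_nonneg _)) (Ne.symm ha₀)⟩
      rcases div_eq_zero_iff.mp hm with h | h
      · exact h
      · exact absurd h (ne_of_gt hD)
    · exfalso
      have hcard : (0:ℝ) < (Fintype.card A : ℝ) := by
        exact_mod_cast Fintype.card_pos_iff.mpr ⟨a⟩
      rcases div_eq_zero_iff.mp hm with h | h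
      · exact one_ne_zero h
      · exact (ne_of_gt hcard) h
  have hZq : ∀ t, t < T → ∀ s a, μstar t s a = 0 → π t s a * q t s a = 0 := by
    intro t ht s a hm
    rcases mul_eq_zero.mp (hZ t ht s a hm) with h | h
    · rw [h, zero_mul]
    · have hu00 : u t s a = 0 := by
        have := Real.sqrt_eq_zero (hu0 t ht s a) |>.mp h
        exact this
      have hq2 : q t s a ^ 2 = 0 := le_antisymm (hu00 ▸ hU t ht s a) (sq_nonneg _)
      rw [pow_eq_zero_iff (two_ne_zero) |>.mp hq2, mul_zero]
  -- key algebraic identity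
  have halg : ∀ t, t < T → ∀ s : S,
      ∑ a, μstar t s a * (π t s a / μstar t s a)^2 * u t s a
        = (∑ a, π t s a * Real.sqrt (u t s a))^2 := by
    intro t ht s
    by_cases hcase : ∃ a₀, π t s a₀ * Real.sqrt (u t s a₀) ≠ 0
    · have hD : 0 < ∑ b', π t s b' * Real.sqrt (u t s b') := by
        obtain ⟨a₀, ha₀⟩ := hcase
        exact Finset.sum_pos' (fun b' _ => mul_nonneg (hπ0 t s b') (Real.sqrt_nonneg _))
          ⟨a₀, Finset.mem_univ a₀,
            lt_of_le_of_ne (mul_nonneg (hπ0 t s a₀) (Real.sqrt_nonneg _)) (Ne.symm ha₀)⟩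
      have hterm : ∀ a, μstar t s a * (π t s a / μstar t s a)^2 * u t s a
          = (π t s a * Real.sqrt (u t s a)) * ∑ b', π t s b' * Real.sqrt (u t s b') := by
        intro a
        have hμa : μstar t s a
            = π t s a * Real.sqrt (u t s a) / ∑ b', π t s b' * Real.sqrt (u t s b') := by
          rw [hμstar t s a, if_pos hcase]
        by_cases hz : π t s a * Real.sqrt (u t s a) = 0
        · rw [hμa, hz, zero_div, zero_mul, zero_mul, zero_mul]
        · have hμne : μstar t s a ≠ 0 := by
            rw [hμa]; exact div_ne_zero hz (ne_of_gt hD)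
          have hus : Real.sqrt (u t s a) * Real.sqrt (u t s a) = u t s a :=
            Real.mul_self_sqrt (hu0 t ht s a)
          obtain ⟨hπne, hxne⟩ := mul_ne_zero_iff.mp hz
          rw [hμa, ← hus]
          field_simp
          rw [Real.sqrt_sq (Real.sqrt_nonneg _)]
      rw [Finset.sum_congr rfl fun a _ => hterm a, ← Finset.sum_mul, sq]
    · push_neg at hcase
      have hRHS : ∑ a, π t s a * Real.sqrt (u t s a) = 0 :=
        Finset.sum_eq_zero fun a _ => hcase a
      rw [hRHS]
      rw [show ((0:ℝ))^2 = 0 from by norm_num]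
      refine Finset.sum_eq_zero fun a _ => ?_
      have h2 : π t s a ^ 2 * u t s a = 0 := by
        have hus : Real.sqrt (u t s a) ^ 2 = u t s a := Real.sq_sqrt (hu0 t ht s a)
        calc π t s a ^ 2 * u t s a = (π t s a * Real.sqrt (u t s a))^2 := by
              rw [mul_pow, hus]
          _ = 0 := by rw [hcase a]; norm_num
      by_cases hm : μstar t s a = 0
      · rw [hm, zero_mul, zero_mul]
      · have e : μstar t s a * (π t s a / μstar t s a)^2 * u t s a
            = π t s a ^ 2 * u t s a / μstar t s a := by
          field_simp
        rw [e, h2, zero_div]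
  -- the master induction
  have key : ∀ (n t : ℕ) (s : S), t + n = T →
      Ex μstar p n t s (pdis π μstar r n t s) = v t s ∧
      Ex π p n t s (retG r n s) = v t s ∧
      VarTraj μstar p n t s (pdis π μstar r n t s)
        ≤ VarTraj π p n t s (retG r n s) := by
    intro n
    induction n with
    | zero =>
      intro t s htn
      have ht : t = T := by omega
      subst ht
      refine ⟨?_, ?_, ?_⟩
      · simp [Ex, pdis, hvT]
      · simp [Ex, retG, hvT]
      · simp [VarTraj, Ex, pdis, retG]
    | succ n IH =>
      intro t s htn
      have htT : t < T := by omega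
      have ht1 : (t+1) + n = T := by omega
      have hn : T - (t+1) = n := by omega
      have hsum_q : ∀ a, ∑ s', p s a s' * (r s a + v (t+1) s') = q t s a := by
        intro a
        have e : ∀ s' : S, p s a s' * (r s a + v (t+1) s')
            = r s a * p s a s' + p s a s' * v (t+1) s' := fun s' => by ring
        rw [Finset.sum_congr rfl fun s' _ => e s', Finset.sum_add_distrib,
          ← Finset.mul_sum, hp1, hq t htT s a]
        ring
      have hsum_q2 : ∀ a, ∑ s', p s a s' * (r s a + v (t+1) s')^2
          = nuF p v t s a + (q t s a)^2 := by
        intro a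
        have e : ∀ s' : S, p s a s' * (r s a + v (t+1) s')^2
            = (r s a)^2 * p s a s' + (2 * r s a) * (p s a s' * v (t+1) s')
              + p s a s' * (v (t+1) s')^2 := fun s' => by ring
        rw [Finset.sum_congr rfl fun s' _ => e s']
        simp only [Finset.sum_add_distrib, ← Finset.mul_sum, hp1, mul_one]
        rw [hq t htT s a]
        simp only [nuF]
        ring
      have hu' : ∀ a, u t s a
          = (∑ s', p s a s' * VarTraj μstar p n (t+1) s'
              (pdis π μstar r n (t+1) s'))
            + nuF p v t s a + (q t s a)^2 := by
        intro a
        have := hUnified t htT s a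
        rwa [hn] at this
      -- first moment, behavior μstar
      have Eμ1 : Ex μstar p (n+1) t s (pdis π μstar r (n+1) t s) = v t s := by
        rw [Ex_succ]
        have step : ∀ a : A, ∑ s', μstar t s a * p s a s' *
            Ex μstar p n (t+1) s' (fun τ => pdis π μstar r (n+1) t s (a, s', τ))
            = π t s a * q t s a := by
          intro a
          have e1 : ∀ s' : S,
              Ex μstar p n (t+1) s' (fun τ => pdis π μstar r (n+1) t s (a, s', τ))
              = (π t s a / μstar t s a) * (r s a + v (t+1) s') := by
            intro s'
            have ef : (fun τ => pdis π μstar r (n+1) t s (a, s', τ))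
                = fun τ => (π t s a / μstar t s a)
                    * (r s a + pdis π μstar r n (t+1) s' τ) := rfl
            rw [ef, Ex_affine μstar p hμstar1 hp1, (IH (t+1) s' ht1).1]
          have e2 : ∀ s' : S, μstar t s a * p s a s'
                * ((π t s a / μstar t s a) * (r s a + v (t+1) s'))
              = (μstar t s a * (π t s a / μstar t s a))
                * (p s a s' * (r s a + v (t+1) s')) := fun s' => by ring
          rw [Finset.sum_congr rfl fun s' _ => by rw [e1 s', e2 s'],
            ← Finset.mul_sum, hsum_q a]
          by_cases hm : μstar t s a = 0
          · rw [hm, zero_mul, zero_mul]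
            exact (hZq t htT s a hm).symm
          · field_simp
        rw [Finset.sum_congr rfl fun a _ => step a, ← hv t htT s]
      -- first moment, on-policy
      have Eπ1 : Ex π p (n+1) t s (retG r (n+1) s) = v t s := by
        rw [Ex_succ]
        have step : ∀ a : A, ∑ s', π t s a * p s a s' *
            Ex π p n (t+1) s' (fun τ => retG r (n+1) s (a, s', τ))
            = π t s a * q t s a := by
          intro a
          have e1 : ∀ s' : S,
              Ex π p n (t+1) s' (fun τ => retG r (n+1) s (a, s', τ))
              = r s a + v (t+1) s' := by
            intro s'
            have ef : (fun τ => retG r (n+1) s (a, s', τ))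
                = fun τ => (1:ℝ) * (r s a + retG r n s' τ) := by
              funext τ; show r s a + retG r n s' τ = _; ring
            rw [ef, Ex_affine π p hπ1 hp1, (IH (t+1) s' ht1).2.1, one_mul]
          have e2 : ∀ s' : S, π t s a * p s a s' * (r s a + v (t+1) s')
              = π t s a * (p s a s' * (r s a + v (t+1) s')) := fun s' => by ring
          rw [Finset.sum_congr rfl fun s' _ => by rw [e1 s', e2 s'],
            ← Finset.mul_sum, hsum_q a]
        rw [Finset.sum_congr rfl fun a _ => step a, ← hv t htT s]
      -- second moment, behavior μstar
      have Eμ2 : Ex μstar p (n+1) t s (fun τ => (pdis π μstar r (n+1) t s τ)^2)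
          = ∑ a, μstar t s a * (π t s a / μstar t s a)^2 * u t s a := by
        rw [Ex_succ]
        refine Finset.sum_congr rfl fun a _ => ?_
        have e1 : ∀ s' : S,
            Ex μstar p n (t+1) s' (fun τ => (pdis π μstar r (n+1) t s (a, s', τ))^2)
            = (π t s a / μstar t s a)^2
              * (VarTraj μstar p n (t+1) s' (pdis π μstar r n (t+1) s')
                + (r s a + v (t+1) s')^2) := by
          intro s'
          have ef : (fun τ => (pdis π μstar r (n+1) t s (a, s', τ))^2)
              = fun τ => (π t s a / μstar t s a)^2
                  * (0 + (r s a + pdis π μstar r n (t+1) s' τ)^2) := by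
            funext τ
            show ((π t s a / μstar t s a)
                * (r s a + pdis π μstar r n (t+1) s' τ))^2 = _
            ring
          rw [ef, Ex_affine μstar p hμstar1 hp1,
            Ex_sq_shift μstar p hμstar1 hp1, (IH (t+1) s' ht1).1]
          ring
        have e2 : ∀ s' : S, μstar t s a * p s a s'
              * ((π t s a / μstar t s a)^2
                * (VarTraj μstar p n (t+1) s' (pdis π μstar r n (t+1) s')
                  + (r s a + v (t+1) s')^2))
            = (μstar t s a * (π t s a / μstar t s a)^2)
              * (p s a s' * VarTraj μstar p n (t+1) s' (pdis π μstar r n (t+1) s')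
                + p s a s' * (r s a + v (t+1) s')^2) := fun s' => by ring
        rw [Finset.sum_congr rfl fun s' _ => by rw [e1 s', e2 s'],
          ← Finset.mul_sum, Finset.sum_add_distrib, hsum_q2 a, hu' a]
        ring
      -- second moment, on-policy
      have Eπ2 : Ex π p (n+1) t s (fun τ => (retG r (n+1) s τ)^2)
          = ∑ a, π t s a *
              ((∑ s', p s a s' * VarTraj π p n (t+1) s' (retG r n s'))
                + nuF p v t s a + (q t s a)^2) := by
        rw [Ex_succ]
        refine Finset.sum_congr rfl fun a _ => ?_
        have e1 : ∀ s' : S,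
            Ex π p n (t+1) s' (fun τ => (retG r (n+1) s (a, s', τ))^2)
            = VarTraj π p n (t+1) s' (retG r n s') + (r s a + v (t+1) s')^2 := by
          intro s'
          have ef : (fun τ => (retG r (n+1) s (a, s', τ))^2)
              = fun τ => (r s a + retG r n s' τ)^2 := rfl
          rw [ef, Ex_sq_shift π p hπ1 hp1, (IH (t+1) s' ht1).2.1]
        have e2 : ∀ s' : S, π t s a * p s a s'
              * (VarTraj π p n (t+1) s' (retG r n s') + (r s a + v (t+1) s')^2)
            = π t s a * (p s a s' * VarTraj π p n (t+1) s' (retG r n s')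
                + p s a s' * (r s a + v (t+1) s')^2) := fun s' => by ring
        rw [Finset.sum_congr rfl fun s' _ => by rw [e1 s', e2 s'],
          ← Finset.mul_sum, Finset.sum_add_distrib, hsum_q2 a]
        ring
      -- Cauchy-Schwarz
      have hD2 : (∑ a, π t s a * Real.sqrt (u t s a))^2 ≤ ∑ a, π t s a * u t s a := by
        have key := Finset.sum_mul_sq_le_sq_mul_sq Finset.univ
          (fun a => Real.sqrt (π t s a))
          (fun a => Real.sqrt (π t s a) * Real.sqrt (u t s a))
        have e1 : ∀ a : A, Real.sqrt (π t s a)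
              * (Real.sqrt (π t s a) * Real.sqrt (u t s a))
            = π t s a * Real.sqrt (u t s a) := fun a => by
          rw [← mul_assoc, Real.mul_self_sqrt (hπ0 t s a)]
        have e2 : ∀ a : A, Real.sqrt (π t s a) ^ 2 = π t s a :=
          fun a => Real.sq_sqrt (hπ0 t s a)
        have e3 : ∀ a : A, (Real.sqrt (π t s a) * Real.sqrt (u t s a))^2
            = π t s a * u t s a := fun a => by
          rw [mul_pow, e2, Real.sq_sqrt (hu0 t htT s a)]
        simp only [e1, e2, e3, hπ1, one_mul] at key
        exact key
      -- pointwise u ≤ w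
      have hUW : ∑ a, π t s a * u t s a
          ≤ ∑ a, π t s a *
              ((∑ s', p s a s' * VarTraj π p n (t+1) s' (retG r n s'))
                + nuF p v t s a + (q t s a)^2) := by
        refine Finset.sum_le_sum fun a _ => mul_le_mul_of_nonneg_left ?_ (hπ0 t s a)
        rw [hu' a]
        have hcore : (∑ s', p s a s' * VarTraj μstar p n (t+1) s'
              (pdis π μstar r n (t+1) s'))
            ≤ ∑ s', p s a s' * VarTraj π p n (t+1) s' (retG r n s') :=
          Finset.sum_le_sum fun s' _ =>
            mul_le_mul_of_nonneg_left (IH (t+1) s' ht1).2.2 (hp0 s a s')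
        linarith
      refine ⟨Eμ1, Eπ1, ?_⟩
      simp only [VarTraj]
      rw [Eμ2, Eμ1, Eπ2, Eπ1, halg t htT s]
      have := hD2.trans hUW
      linarith
  intro t ht s
  have htn : t + (T - t) = T := by omega
  exact (key (T - t) t s htn).2.2
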